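/- arXiv:math/0612604 — 4 statements merged into one kernel-verified Lean document; each statement's English description precedes it below -/
import Mathlib

section
/- Let E be a Banach space with an sc-structure and K a finite-dimensional subspace of E_∞ = ⋂ₘ Eₘ. Then K splits the sc-space E: there exists a closed subspace Y of E such that, setting Yₘ = Y ∩ Eₘ, one has Eₘ = K ⊕ Yₘ (topological direct sum) for every m ≥ 0, and Y_∞ = ⋂ₘ Yₘ is dense in every Yₘ. -/
/-!
Hahn–Banach gives a continuous projection `P` of `E₀` onto `K`; take `Y = ker P`. As `K ⊆ E_∞`
and the inclusions are injective, `down m` maps `Kₘ` isomorphically onto `K`, so `P` pulls back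
to a continuous projection `Qₘ` of `Eₘ` onto `Kₘ` with kernel `Yₘ`. The complementary projection
`1 - Qₘ` fixes `Yₘ` and maps smooth points to smooth points of `Yₘ` (since `Kₘ ⊆ E_∞`), so it
carries the density of `E_∞` in `Eₘ` over to density of `Y_∞` in `Yₘ`.
-/

variable {E F G : ℕ → Type*}
  [∀ m, NormedAddCommGroup (E m)] [∀ m, NormedSpace ℝ (E m)]
  [∀ m, NormedAddCommGroup (F m)] [∀ m, NormedSpace ℝ (F m)]
  [∀ m, NormedAddCommGroup (G m)] [∀ m, NormedSpace ℝ (G m)]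

/-- The composite inclusion from level `m + k` down to level `m`. -/
def inclAdd (ι : ∀ m, E (m + 1) →L[ℝ] E m) (m : ℕ) : ∀ k, E (m + k) →L[ℝ] E m
  | 0 => ContinuousLinearMap.id ℝ (E m)
  | k + 1 => (inclAdd ι m k).comp (ι (m + k))

/-- The inclusion from level `m` down to level `0`. -/
def down (ι : ∀ m, E (m + 1) →L[ℝ] E m) : ∀ m, E m →L[ℝ] E 0
  | 0 => ContinuousLinearMap.id ℝ (E 0)
  | m + 1 => (down ι m).comp (ι m)

/-- A point on level `m` is smooth (belongs to `E_∞`) if it lifts to every higher level. -/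
def IsSmoothPt (ι : ∀ m, E (m + 1) →L[ℝ] E m) (m : ℕ) (x : E m) : Prop :=
  ∀ k, ∃ y : E (m + k), inclAdd ι m k y = x

/-- An sc-structure: injective compact inclusions with smooth points dense on every level. -/
def ScStructure (ι : ∀ m, E (m + 1) →L[ℝ] E m) : Prop :=
  (∀ m, Function.Injective (ι m)) ∧ (∀ m, IsCompactOperator (ι m)) ∧
    (∀ m, Dense {x : E m | IsSmoothPt ι m x})

section Complement

variable {𝕜 V W : Type*} [NontriviallyNormedField 𝕜] [CompleteSpace 𝕜]
  [NormedAddCommGroup V] [NormedSpace 𝕜 V] [NormedAddCommGroup W] [NormedSpace 𝕜 W]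

theorem exists_proj_comap_of_le_range {K : Submodule 𝕜 V} [FiniteDimensional 𝕜 K]
    (P : V →L[𝕜] K) (hP : ∀ x : K, P x = x) (T : W →L[𝕜] V) (hT : Function.Injective T)
    (hKT : K ≤ LinearMap.range (T : W →ₗ[𝕜] V)) :
    ∃ Q : W →L[𝕜] K.comap (T : W →ₗ[𝕜] V), (∀ x : K.comap (T : W →ₗ[𝕜] V), Q x = x) ∧
      LinearMap.ker (Q : W →ₗ[𝕜] K.comap (T : W →ₗ[𝕜] V)) =
        (LinearMap.ker (P : V →ₗ[𝕜] K)).comap (T : W →ₗ[𝕜] V) := by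
  let R : K.comap (T : W →ₗ[𝕜] V) →ₗ[𝕜] K := (T : W →ₗ[𝕜] V).restrict fun _ hx => hx
  have hR : Function.Bijective R := by
    refine ⟨fun x y hxy => Subtype.ext (hT (congrArg Subtype.val hxy)), fun y => ?_⟩
    obtain ⟨x, hx⟩ := hKT y.2
    exact ⟨⟨x, show T x ∈ K from hx ▸ y.2⟩, Subtype.ext hx⟩
  let e := LinearEquiv.ofBijective R hR
  let Q : W →L[𝕜] K.comap (T : W →ₗ[𝕜] V) :=
    (LinearMap.toContinuousLinearMap (e.symm : K →ₗ[𝕜] _)).comp (P.comp T)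
  refine ⟨Q, fun x => ?_, ?_⟩
  · show e.symm (P (R x)) = x
    rw [hP, LinearEquiv.symm_apply_eq]
    rfl
  · ext x
    simp [Q]

end Complement

theorem mem_closure_ker_inf_of_dense {𝕜 W : Type*} [Ring 𝕜] [TopologicalSpace W]
    [AddCommGroup W] [IsTopologicalAddGroup W] [Module 𝕜 W] {D q : Submodule 𝕜 W}
    (hD : Dense (D : Set W)) (hqD : q ≤ D) (Q : W →L[𝕜] q) (hQ : ∀ x : q, Q x = x) {y : W}
    (hy : y ∈ LinearMap.ker (Q : W →ₗ[𝕜] q)) :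
    y ∈ closure ((LinearMap.ker (Q : W →ₗ[𝕜] q) ⊓ D : Submodule 𝕜 W) : Set W) := by
  let π : W →L[𝕜] W := ContinuousLinearMap.id 𝕜 W - q.subtypeL.comp Q
  have hπy : π y = y := by simp [π, show Q y = 0 from hy]
  have hπD : ∀ z ∈ (D : Set W), π z ∈ LinearMap.ker (Q : W →ₗ[𝕜] q) ⊓ D := fun z hz =>
    ⟨by simp [π, hQ], D.sub_mem hz (hqD (Q z).2)⟩
  simpa [hπy] using map_mem_closure π.continuous (hD y) hπD

theorem down_inclAdd (ι : ∀ m, E (m + 1) →L[ℝ] E m) (m : ℕ) :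
    ∀ k (x : E (m + k)), down ι m (inclAdd ι m k x) = down ι (m + k) x
  | 0, _ => rfl
  | k + 1, x => down_inclAdd ι m k (ι (m + k) x)

theorem down_injective {ι : ∀ m, E (m + 1) →L[ℝ] E m}
    (hinj : ∀ m, Function.Injective (ι m)) : ∀ m, Function.Injective (down ι m)
  | 0 => Function.injective_id
  | m + 1 => (down_injective hinj m).comp (hinj m)

theorem IsSmoothPt.exists_down_eq {ι : ∀ m, E (m + 1) →L[ℝ] E m} {x : E 0}
    (hx : IsSmoothPt ι 0 x) (n : ℕ) : ∃ y : E n, down ι n y = x := by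
  obtain ⟨y, hy⟩ := hx n
  rw [← zero_add n]
  exact ⟨y, (down_inclAdd ι 0 n y).symm.trans hy⟩

theorem isSmoothPt_of_isSmoothPt_down {ι : ∀ m, E (m + 1) →L[ℝ] E m}
    (hinj : ∀ m, Function.Injective (ι m)) {m : ℕ} {z : E m}
    (hz : IsSmoothPt ι 0 (down ι m z)) : IsSmoothPt ι m z := fun k => by
  obtain ⟨w, hw⟩ := hz.exists_down_eq (m + k)
  exact ⟨w, down_injective hinj m (by rw [down_inclAdd, hw])⟩

def smoothSubmodule (ι : ∀ m, E (m + 1) →L[ℝ] E m) (m : ℕ) : Submodule ℝ (E m) where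
  carrier := {x | IsSmoothPt ι m x}
  zero_mem' _ := ⟨0, map_zero _⟩
  add_mem' ha hb k := by
    obtain ⟨y, rfl⟩ := ha k
    obtain ⟨z, rfl⟩ := hb k
    exact ⟨y + z, map_add _ y z⟩
  smul_mem' c _ ha k := by
    obtain ⟨y, rfl⟩ := ha k
    exact ⟨c • y, map_smul _ c y⟩

theorem stmt2_general
    (ι : ∀ m, E (m + 1) →L[ℝ] E m) (hsc : ScStructure ι)
    (K : Submodule ℝ (E 0)) (hKfin : FiniteDimensional ℝ K)
    (hKsmooth : ∀ x ∈ K, IsSmoothPt ι 0 x) :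
    ∃ Y : Submodule ℝ (E 0), IsClosed (Y : Set (E 0)) ∧
      (∀ m, IsClosed ((Y.comap (down ι m : E m →ₗ[ℝ] E 0) : Submodule ℝ (E m)) : Set (E m))) ∧
      (∀ m, IsCompl (K.comap (down ι m : E m →ₗ[ℝ] E 0))
          (Y.comap (down ι m : E m →ₗ[ℝ] E 0))) ∧
      (∀ m, ∀ y : E m, down ι m y ∈ Y →
          y ∈ closure {z : E m | down ι m z ∈ Y ∧ IsSmoothPt ι m z}) := by
  obtain ⟨hinj, -, hdense⟩ := hsc
  obtain ⟨P, hP⟩ := Submodule.ClosedComplemented.of_finiteDimensional K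
  have hlevel (m : ℕ) := exists_proj_comap_of_le_range P hP (down ι m) (down_injective hinj m)
    fun x hx => (hKsmooth x hx).exists_down_eq m
  choose Q hQ hker using hlevel
  refine ⟨LinearMap.ker (P : E 0 →ₗ[ℝ] K), P.isClosed_ker,
    fun m => P.isClosed_ker.preimage (down ι m).continuous,
    fun m => hker m ▸ LinearMap.isCompl_of_proj (hQ m), fun m y hy => ?_⟩
  have hKm : K.comap (down ι m : E m →ₗ[ℝ] E 0) ≤ smoothSubmodule ι m := fun z hz =>
    isSmoothPt_of_isSmoothPt_down hinj (hKsmooth _ hz)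
  have := mem_closure_ker_inf_of_dense (hdense m) hKm (Q m) (hQ m) ((hker m).ge hy)
  rw [hker m] at this
  exact this

theorem stmt2 [∀ m, CompleteSpace (E m)]
    (ι : ∀ m, E (m + 1) →L[ℝ] E m) (hsc : ScStructure ι)
    (K : Submodule ℝ (E 0)) (hKfin : FiniteDimensional ℝ K)
    (hKsmooth : ∀ x ∈ K, IsSmoothPt ι 0 x) :
    ∃ Y : Submodule ℝ (E 0), IsClosed (Y : Set (E 0)) ∧
      (∀ m, IsClosed ((Y.comap (down ι m : E m →ₗ[ℝ] E 0) : Submodule ℝ (E m)) : Set (E m))) ∧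
      (∀ m, IsCompl (K.comap (down ι m : E m →ₗ[ℝ] E 0))
          (Y.comap (down ι m : E m →ₗ[ℝ] E 0))) ∧
      (∀ m, ∀ y : E m, down ι m y ∈ Y →
          y ∈ closure {z : E m | down ι m z ∈ Y ∧ IsSmoothPt ι m z}) :=
  stmt2_general ι hsc K hKfin hKsmooth
end

section
/- Let F be a Banach space, F = D ⊕ Y a topological direct sum with D finite-dimensional and Y closed, and let F_∞ ⊆ F be a dense linear subspace. Then there exists a finite-dimensional subspace C ⊆ F_∞ with F = C ⊕ Y. -/
/-!
Since `Y` is closed of finite codimension, the projection `P : F → D` along `Y` is continuous, so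
`P(F_∞)` is a dense subspace of the finite-dimensional space `D`; being closed, it is all of `D`.
A linear section of `P` with values in `F_∞` then has a finite-dimensional range complementary to
`ker P = Y`.
-/

open Function in
theorem LinearMap.isCompl_range_ker_of_leftInverse {R M N : Type*} [Ring R] [AddCommGroup M]
    [AddCommGroup N] [Module R M] [Module R N] (f₁ : M →ₗ[R] N) (f₂ : N →ₗ[R] M)
    (h : LeftInverse f₂ f₁) : IsCompl (range f₁) (ker f₂) := by
  have hidem : IsIdempotentElem (f₁ ∘ₗ f₂) := by ext x; simp [h (f₂ x)]
  have hrange : range (f₁ ∘ₗ f₂) = range f₁ :=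
    range_comp_of_range_eq_top _ (range_eq_top_of_surjective _ h.surjective)
  have hker : ker (f₁ ∘ₗ f₂) = ker f₂ :=
    ker_comp_of_ker_eq_bot _ (ker_eq_bot_of_injective h.injective)
  simpa only [hrange, hker] using LinearMap.IsIdempotentElem.isCompl hidem

theorem Submodule.exists_isCompl_ker_of_map_eq_top {K V W : Type*} [DivisionRing K]
    [AddCommGroup V] [Module K V] [AddCommGroup W] [Module K W] [FiniteDimensional K W]
    (f : V →ₗ[K] W) (S : Submodule K V) (hS : S.map f = ⊤) :
    ∃ C : Submodule K V, FiniteDimensional K C ∧ C ≤ S ∧ IsCompl C (LinearMap.ker f) := by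
  obtain ⟨g, hg⟩ := (f ∘ₗ S.subtype).exists_rightInverse_of_surjective
    (by rwa [LinearMap.range_comp, range_subtype])
  refine ⟨LinearMap.range (S.subtype ∘ₗ g), inferInstance, ?_, ?_⟩
  · rw [LinearMap.range_comp]
    exact map_subtype_le S _
  · exact LinearMap.isCompl_range_ker_of_leftInverse _ _ (LinearMap.congr_fun hg)

theorem Submodule.map_eq_top_of_dense {𝕜 E F : Type*} [NontriviallyNormedField 𝕜]
    [CompleteSpace 𝕜] [AddCommGroup E] [TopologicalSpace E] [Module 𝕜 E]
    [AddCommGroup F] [TopologicalSpace F] [IsTopologicalAddGroup F] [Module 𝕜 F]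
    [ContinuousSMul 𝕜 F] [T2Space F] [FiniteDimensional 𝕜 F]
    (f : E →L[𝕜] F) (hf : DenseRange f) (S : Submodule 𝕜 E) (hS : Dense (S : Set E)) :
    S.map (f : E →ₗ[𝕜] F) = ⊤ := by
  have hdense : Dense (S.map (f : E →ₗ[𝕜] F) : Set F) := by
    rw [map_coe]; exact hf.dense_image f.continuous hS
  rw [← coe_eq_univ, ← (closed_of_finiteDimensional _).closure_eq, hdense.closure_eq]

theorem stmt9_general {F : Type*} [NormedAddCommGroup F] [NormedSpace ℝ F]
    (D Y : Submodule ℝ F) (hD : FiniteDimensional ℝ D) (hY : IsClosed (Y : Set F))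
    (hcompl : IsCompl D Y)
    (Finf : Submodule ℝ F) (hdense : Dense (Finf : Set F)) :
    ∃ C : Submodule ℝ F, FiniteDimensional ℝ C ∧ C ≤ Finf ∧ IsCompl C Y := by
  have hTop : D.IsTopCompl Y :=
    (Submodule.IsCompl.isTopCompl_of_isClosed_of_finiteDimensional hcompl.symm hY).symm
  have hP : Finf.map (D.projectionOntoL Y hTop : F →ₗ[ℝ] D) = ⊤ :=
    Finf.map_eq_top_of_dense _ (D.projectionOntoL_surjective hTop).denseRange hdense
  have hC := Finf.exists_isCompl_ker_of_map_eq_top _ hP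
  rwa [Submodule.ker_projectionOntoL] at hC

theorem stmt9 {F : Type*} [NormedAddCommGroup F] [NormedSpace ℝ F] [CompleteSpace F]
    (D Y : Submodule ℝ F) (hD : FiniteDimensional ℝ D) (hY : IsClosed (Y : Set F))
    (hcompl : IsCompl D Y)
    (Finf : Submodule ℝ F) (hdense : Dense (Finf : Set F)) :
    ∃ C : Submodule ℝ F, FiniteDimensional ℝ C ∧ C ≤ Finf ∧ IsCompl C Y :=
  stmt9_general D Y hD hY hcompl Finf hdense
end

section
/- Let E, F, G be sc-Banach spaces, U ⊆ E and V ⊆ F open, and f : U → F, g : V → G maps of class sc¹ with f(U) ⊆ V. Then g ∘ f : U → G is of class sc¹ and T(g∘f) = Tg ∘ Tf; in particular D(g∘f)(x) = Dg(f(x)) ∘ Df(x) for every x ∈ U₁. -/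
variable {E F G : ℕ → Type*}
  [∀ m, NormedAddCommGroup (E m)] [∀ m, NormedSpace ℝ (E m)]
  [∀ m, NormedAddCommGroup (F m)] [∀ m, NormedSpace ℝ (F m)]
  [∀ m, NormedAddCommGroup (G m)] [∀ m, NormedSpace ℝ (G m)]

/-- The inclusion from level `m + 1` down to level `1`. -/
def down1 (ι : ∀ m, E (m + 1) →L[ℝ] E m) : ∀ m, E (m + 1) →L[ℝ] E 1
  | 0 => ContinuousLinearMap.id ℝ (E 1)
  | m + 1 => (down1 ι m).comp (ι (m + 1))

/-- `f : U → F` is sc⁰ with level maps `fm`: `f` maps `Uₘ` into `Fₘ`, witnessed by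
the continuous lifts `fm m : Uₘ → Fₘ`. -/
def IsSc0With (ιE : ∀ m, E (m + 1) →L[ℝ] E m) (ιF : ∀ m, F (m + 1) →L[ℝ] F m)
    (U : Set (E 0)) (f : E 0 → F 0) (fm : ∀ m, E m → F m) : Prop :=
  ∀ m, ContinuousOn (fm m) {x : E m | down ιE m x ∈ U} ∧
    ∀ x : E m, down ιE m x ∈ U → down ιF m (fm m x) = f (down ιE m x)

/-- `f : U → F` is sc¹ with level maps `fm` and linearization `Df`:
it is sc⁰, for every `x ∈ U₁` the operator `Df x ∈ L(E₀,F₀)` satisfies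
`‖f(x+h) − f(x) − Df(x)h‖₀ / ‖h‖₁ → 0`, and the tangent map
`Tf(x,h) = (f(x), Df(x)h)` is itself sc⁰ (witnessed by the lifts `Dfm`). -/
def IsSc1With (ιE : ∀ m, E (m + 1) →L[ℝ] E m) (ιF : ∀ m, F (m + 1) →L[ℝ] F m)
    (U : Set (E 0)) (f : E 0 → F 0)
    (fm : ∀ m, E m → F m) (Df : E 1 → (E 0 →L[ℝ] F 0)) : Prop :=
  IsSc0With ιE ιF U f fm ∧
  (∀ x : E 1, down ιE 1 x ∈ U →
    ∀ ε > (0 : ℝ), ∃ δ > (0 : ℝ), ∀ h : E 1, ‖h‖ < δ →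
      down ιE 1 (x + h) ∈ U →
      ‖f (down ιE 1 (x + h)) - f (down ιE 1 x) - Df x (down ιE 1 h)‖ ≤ ε * ‖h‖) ∧
  (∀ m, ∃ Dfm : E (m + 1) → E m → F m,
    ContinuousOn (fun p : E (m + 1) × E m => Dfm p.1 p.2)
      {p : E (m + 1) × E m | down ιE (m + 1) p.1 ∈ U} ∧
    ∀ (x : E (m + 1)) (h : E m), down ιE (m + 1) x ∈ U →
      down ιF m (Dfm x h) = Df (down1 ιE m x) (down ιE m h))

/-! The sc¹ estimate at `x ∈ U₁` says precisely that `f ∘ ι` is Fréchet differentiable on `E₁`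
at `x` with derivative `Df(x) ∘ ι`, where `ι : E₁ → E₀` is the inclusion. The usual chain rule
does not apply, since `g` is only differentiable along `F₁` and the increment
`a = f₁(x + h) - f₁(x) ∈ F₁` of the level-one map is small but not `O(‖h‖₁)`. Instead, the mean
value inequality along the segment `[f₁(x), f₁(x) + a]` in `F₁` reduces everything to bounding
`(Dg(z) - Dg(f₁(x))) (ι a)` for `z` near `f₁(x)`. Writing `ι a = Df(x)(ι h) + o(‖h‖₁)`, the first
part is `o(‖h‖₁)` because `Df(x) ∘ ι` is a compact operator and a jointly continuous family of
operators converges uniformly on compact sets; the second is handled by local boundedness of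
`Dg`. The tangent maps compose level by level. -/

open Set Filter Topology Asymptotics

section Analysis

variable {A B C D : Type*}
  [NormedAddCommGroup A] [NormedSpace ℝ A] [NormedAddCommGroup B] [NormedSpace ℝ B]
  [NormedAddCommGroup C] [NormedSpace ℝ C] [NormedAddCommGroup D] [NormedSpace ℝ D]

theorem norm_sub_sub_le_of_hasFDerivAt_segment {H : B → D} {H' : B → B →L[ℝ] D} {y a : B}
    {K : ℝ} (hH : ∀ t ∈ Icc (0 : ℝ) 1, HasFDerivAt H (H' (y + t • a)) (y + t • a))
    (hbound : ∀ t ∈ Icc (0 : ℝ) 1, ‖H' (y + t • a) a - H' y a‖ ≤ K) :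
    ‖H (y + a) - H y - H' y a‖ ≤ K := by
  have hderiv : ∀ t ∈ Icc (0 : ℝ) 1, HasDerivWithinAt (fun t : ℝ => H (y + t • a) - t • H' y a)
      (H' (y + t • a) a - H' y a) (Icc 0 1) t := by
    intro t ht
    have hline : HasDerivAt (fun s : ℝ => y + s • a) a t := by
      simpa using ((hasDerivAt_id t).smul_const a).const_add y
    have hlin : HasDerivAt (fun s : ℝ => s • H' y a) (H' y a) t := by
      simpa using (hasDerivAt_id t).smul_const (H' y a)
    exact (((hH t ht).comp_hasDerivAt t hline).sub hlin).hasDerivWithinAt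
  have := norm_image_sub_le_of_norm_deriv_le_segment_01' hderiv
    fun t ht => hbound t (Ico_subset_Icc_self ht)
  simpa [sub_right_comm] using this

theorem HasFDerivAt.exists_norm_sub_sub_le {φ : A → B} {L : A →L[ℝ] B} {x : A}
    (h : HasFDerivAt φ L x) {ε : ℝ} (hε : 0 < ε) :
    ∃ δ > 0, ∀ v : A, ‖v‖ < δ → ‖φ (x + v) - φ x - L v‖ ≤ ε * ‖v‖ := by
  obtain ⟨δ, hδ, hball⟩ :=
    Metric.eventually_nhds_iff_ball.1 ((hasFDerivAt_iff_isLittleO_nhds_zero.1 h).def hε)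
  exact ⟨δ, hδ, fun v hv => hball v (mem_ball_zero_iff.2 hv)⟩

variable {X : Type*} [TopologicalSpace X]

theorem exists_eventually_opNorm_le {L : X → C →L[ℝ] D} {y : X}
    (hL : ContinuousAt (fun p : X × C => L p.1 p.2) (y, 0)) :
    ∃ M, ∀ᶠ z in 𝓝 y, ‖L z‖ ≤ M := by
  have hsmall : ∀ᶠ p : X × C in 𝓝 (y, 0), L p.1 p.2 ∈ Metric.ball 0 1 :=
    hL.eventually (by simp only [map_zero]; exact Metric.ball_mem_nhds 0 one_pos)
  rw [nhds_prod_eq] at hsmall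
  obtain ⟨S, hS, W, hW, hSW⟩ := eventually_prod_iff.1 hsmall
  obtain ⟨ρ, hρ, hρW⟩ := Metric.eventually_nhds_iff_ball.1 hW
  refine ⟨2 / ρ, hS.mono fun z hz => ?_⟩
  refine ContinuousLinearMap.opNorm_le_of_shell hρ (by positivity) (c := (2 : ℝ)) (by norm_num)
    fun v hv hvρ => ?_
  have h1 := mem_ball_zero_iff.1 (hSW hz (hρW v (mem_ball_zero_iff.2 hvρ)))
  rw [Real.norm_two] at hv
  calc ‖L z v‖ ≤ 1 := h1.le
    _ ≤ 2 / ρ * ‖v‖ := by rw [div_mul_eq_mul_div, le_div_iff₀ hρ]; linarith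

theorem IsCompactOperator.tendsto_comp {L : X → C →L[ℝ] D} {y : X}
    (hL : ∀ k, ContinuousAt (fun p : X × C => L p.1 p.2) (y, k)) {T : A →L[ℝ] C}
    (hT : IsCompactOperator T) : Tendsto (fun z => (L z).comp T) (𝓝 y) (𝓝 ((L y).comp T)) := by
  rw [Metric.tendsto_nhds]
  intro ε hε
  have hK : IsCompact (closure (T '' Metric.closedBall 0 1)) :=
    hT.isCompact_closure_image_closedBall (f := (T : A →ₗ[ℝ] C)) 1
  have hclose : ∀ k ∈ closure (T '' Metric.closedBall 0 1),
      ∀ᶠ p : X × C in 𝓝 (y, k), dist (L p.1 p.2) (L y p.2) < ε / 2 := by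
    intro k _
    have h1 := (hL k).eventually (Metric.ball_mem_nhds (L y k) (by positivity : 0 < ε / 4))
    have h2 := ((L y).continuous.comp continuous_snd).continuousAt (x := (y, k)) |>.eventually
      (Metric.ball_mem_nhds (L y k) (by positivity : 0 < ε / 4))
    filter_upwards [h1, h2] with p hp1 hp2
    calc dist (L p.1 p.2) (L y p.2) ≤ dist (L p.1 p.2) (L y k) + dist (L y p.2) (L y k) :=
          dist_triangle_right _ _ _
      _ < ε / 4 + ε / 4 := add_lt_add hp1 hp2
      _ = ε / 2 := by ring
  filter_upwards [hK.eventually_forall_of_forall_eventually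
    (P := fun z k => dist (L z k) (L y k) < ε / 2) hclose] with z hz
  rw [dist_eq_norm]
  refine (ContinuousLinearMap.opNorm_le_of_unit_norm (by positivity) fun v hv => ?_).trans_lt
    (half_lt_self hε)
  have hTv : T v ∈ closure (T '' Metric.closedBall 0 1) :=
    subset_closure ⟨v, by simp [hv], rfl⟩
  simpa [dist_eq_norm] using (hz _ hTv).le

theorem norm_apply_sub_apply_le_of_comp {L L' : C →L[ℝ] D} {T : A →L[ℝ] C} {M ε : ℝ}
    (hL : ‖L‖ ≤ M) (hL' : ‖L'‖ ≤ M) (hT : ‖L.comp T - L'.comp T‖ ≤ ε) (h : A) (r : C) :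
    ‖L (T h + r) - L' (T h + r)‖ ≤ ε * ‖h‖ + 2 * M * ‖r‖ := by
  have hsplit : L (T h + r) - L' (T h + r) = (L.comp T - L'.comp T) h + (L - L') r := by
    simp only [map_add, sub_apply, ContinuousLinearMap.comp_apply]
    abel
  rw [hsplit, two_mul]
  exact norm_add_le_of_le ((ContinuousLinearMap.le_opNorm _ _).trans (by gcongr))
    ((ContinuousLinearMap.le_opNorm _ _).trans (by gcongr; exact norm_sub_le_of_le hL hL'))

theorem hasFDerivAt_comp_of_isCompactOperator {g : C → D} {Dg : B → C →L[ℝ] D} {ψ : A → C}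
    {φ : A → B} {j : B →L[ℝ] C} {T : A →L[ℝ] C} {x : A}
    (hψ : HasFDerivAt ψ T x) (hT : IsCompactOperator T)
    (hφ : ContinuousAt φ x) (hψφ : ψ =ᶠ[𝓝 x] j ∘ φ)
    (hg : ∀ᶠ z in 𝓝 (φ x), HasFDerivAt (g ∘ j) ((Dg z).comp j) z)
    (hDg : ∀ k, ContinuousAt (fun p : B × C => Dg p.1 p.2) (φ x, k)) :
    HasFDerivAt (g ∘ ψ) ((Dg (φ x)).comp T) x := by
  set y := φ x
  obtain ⟨M, hM⟩ := exists_eventually_opNorm_le (hDg 0)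
  rw [hasFDerivAt_iff_isLittleO_nhds_zero] at hψ ⊢
  set r : A → C := fun h => ψ (x + h) - ψ x - T h
  refine isLittleO_iff.2 fun c hc => ?_
  have hnear : ∀ᶠ z in 𝓝 y, HasFDerivAt (g ∘ j) ((Dg z).comp j) z ∧ ‖Dg z‖ ≤ M ∧
      ‖(Dg z).comp T - (Dg y).comp T‖ < c / 2 := by
    simpa only [dist_eq_norm] using
      hg.and (hM.and (Metric.tendsto_nhds.1 (hT.tendsto_comp hDg) _ (half_pos hc)))
  obtain ⟨δ, hδ, hball⟩ := Metric.eventually_nhds_iff_ball.1 hnear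
  have hx : Tendsto (fun h : A => x + h) (𝓝 0) (𝓝 x) :=
    (continuous_const_add x).tendsto' 0 x (add_zero x)
  filter_upwards [(hφ.tendsto.comp hx).eventually (Metric.ball_mem_nhds y hδ), hx.eventually hψφ,
    (hψ.norm_left.const_mul_left (3 * M)).def (half_pos hc)] with h hh heq hr
  set a := φ (x + h) - y
  have hψx : ψ x = j y := hψφ.self_of_nhds
  have hja : j a = T h + r h := by
    simp only [r, a, map_sub, Function.comp_apply ▸ heq, hψx]
    abel
  have hseg : ∀ t ∈ Icc (0 : ℝ) 1, y + t • a ∈ Metric.ball y δ := by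
    intro t ht
    rw [Metric.mem_ball, dist_self_add_left, norm_smul, Real.norm_of_nonneg ht.1]
    calc t * ‖a‖ ≤ ‖a‖ := mul_le_of_le_one_left (norm_nonneg _) ht.2
      _ < δ := by rwa [← dist_eq_norm]
  have hDgy : ‖Dg y‖ ≤ M := (hball y (Metric.mem_ball_self hδ)).2.1
  have hmvt : ‖g (j (y + a)) - g (j y) - Dg y (j a)‖ ≤ c / 2 * ‖h‖ + 2 * M * ‖r h‖ := by
    refine norm_sub_sub_le_of_hasFDerivAt_segment (H := g ∘ j) (H' := fun z => (Dg z).comp j)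
      (fun t ht => (hball _ (hseg t ht)).1) fun t ht => ?_
    obtain ⟨-, hMz, hTz⟩ := hball _ (hseg t ht)
    simpa only [ContinuousLinearMap.comp_apply, hja] using
      norm_apply_sub_apply_le_of_comp hMz hDgy hTz.le h (r h)
  have hdecomp : (g ∘ ψ) (x + h) - (g ∘ ψ) x - ((Dg y).comp T) h =
      (g (j (y + a)) - g (j y) - Dg y (j a)) + Dg y (r h) := by
    simp only [Function.comp_apply, ContinuousLinearMap.comp_apply, hja, map_add, heq, hψx, a,
      add_sub_cancel]
    abel
  calc _ = ‖(g (j (y + a)) - g (j y) - Dg y (j a)) + Dg y (r h)‖ := by rw [hdecomp]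
    _ ≤ (c / 2 * ‖h‖ + 2 * M * ‖r h‖) + M * ‖r h‖ :=
        norm_add_le_of_le hmvt ((ContinuousLinearMap.le_opNorm _ _).trans (by gcongr))
    _ ≤ c * ‖h‖ := by linarith [(Real.le_norm_self _).trans hr]

end Analysis

section

variable {ιE : ∀ m, E (m + 1) →L[ℝ] E m} {ιF : ∀ m, F (m + 1) →L[ℝ] F m}
  {ιG : ∀ m, G (m + 1) →L[ℝ] G m} {U : Set (E 0)} {V : Set (F 0)} {f : E 0 → F 0}
  {g : F 0 → G 0} {fm : ∀ m, E m → F m} {gm : ∀ m, F m → G m} {Df : E 1 → E 0 →L[ℝ] F 0}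
  {Dg : F 1 → F 0 →L[ℝ] G 0}

theorem isOpen_preimage_down (hU : IsOpen U) (m : ℕ) : IsOpen {x : E m | down ιE m x ∈ U} :=
  hU.preimage (down ιE m).continuous

theorem down_succ_eq_down_one_down1 (ι : ∀ m, E (m + 1) →L[ℝ] E m) (m : ℕ) (x : E (m + 1)) :
    down ι (m + 1) x = down ι 1 (down1 ι m x) := by
  induction m with
  | zero => rfl
  | succ m ih => exact ih (ι (m + 1) x)

theorem IsSc0With.down_mem (hf : IsSc0With ιE ιF U f fm) (hfV : MapsTo f U V) {m : ℕ}
    {x : E m} (hx : down ιE m x ∈ U) : down ιF m (fm m x) ∈ V :=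
  (hf m).2 x hx ▸ hfV hx

theorem IsSc0With.comp (hg : IsSc0With ιF ιG V g gm) (hf : IsSc0With ιE ιF U f fm)
    (hfV : MapsTo f U V) : IsSc0With ιE ιG U (g ∘ f) (fun m => gm m ∘ fm m) := fun m =>
  ⟨(hg m).1.comp (hf m).1 fun _ hx => hf.down_mem hfV hx, fun x hx => by
    simp only [Function.comp_apply, (hg m).2 _ (hf.down_mem hfV hx), (hf m).2 x hx]⟩

theorem IsSc0With.down1_apply (hιF : Function.Injective (ιF 0)) (hf : IsSc0With ιE ιF U f fm)
    {m : ℕ} {x : E (m + 1)} (hx : down ιE (m + 1) x ∈ U) :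
    down1 ιF m (fm (m + 1) x) = fm 1 (down1 ιE m x) := by
  have hx1 : down ιE 1 (down1 ιE m x) ∈ U := down_succ_eq_down_one_down1 ιE m x ▸ hx
  apply hιF
  change down ιF 1 _ = down ιF 1 _
  rw [← down_succ_eq_down_one_down1, (hf (m + 1)).2 x hx, (hf 1).2 _ hx1,
    down_succ_eq_down_one_down1]

theorem IsSc1With.continuousOn_apply (hf : IsSc1With ιE ιF U f fm Df) :
    ContinuousOn (fun p : E 1 × E 0 => Df p.1 p.2) {p | down ιE 1 p.1 ∈ U} := by
  obtain ⟨Df0, hcont, hDf0⟩ := hf.2.2 0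
  exact hcont.congr fun p hp => (hDf0 p.1 p.2 hp).symm

theorem IsSc1With.hasFDerivAt (hU : IsOpen U) (hf : IsSc1With ιE ιF U f fm Df) {x : E 1}
    (hx : down ιE 1 x ∈ U) : HasFDerivAt (f ∘ down ιE 1) ((Df x).comp (down ιE 1)) x := by
  rw [hasFDerivAt_iff_isLittleO_nhds_zero]
  refine isLittleO_iff.2 fun c hc => ?_
  obtain ⟨δ, hδ, hest⟩ := hf.2.1 x hx c hc
  have hxU : ∀ᶠ h in 𝓝 (0 : E 1), down ιE 1 (x + h) ∈ U :=
    ((continuous_const_add x).tendsto' 0 x (add_zero x)).eventually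
      ((isOpen_preimage_down hU 1).mem_nhds hx)
  filter_upwards [Metric.ball_mem_nhds 0 hδ, hxU] with h hh hhU
  exact hest h (mem_ball_zero_iff.1 hh) hhU

theorem IsSc1With.hasFDerivAt_comp (hU : IsOpen U) (hV : IsOpen V)
    (hιE : IsCompactOperator (ιE 0)) (hf : IsSc1With ιE ιF U f fm Df)
    (hg : IsSc1With ιF ιG V g gm Dg) (hfV : MapsTo f U V) {x : E 1} (hx : down ιE 1 x ∈ U) :
    HasFDerivAt ((g ∘ f) ∘ down ιE 1) (((Dg (fm 1 x)).comp (Df x)).comp (down ιE 1)) x := by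
  have hxU : {z : E 1 | down ιE 1 z ∈ U} ∈ 𝓝 x := (isOpen_preimage_down hU 1).mem_nhds hx
  have hy : down ιF 1 (fm 1 x) ∈ V := hf.1.down_mem hfV hx
  have hyV : {z : F 1 | down ιF 1 z ∈ V} ∈ 𝓝 (fm 1 x) := (isOpen_preimage_down hV 1).mem_nhds hy
  refine hasFDerivAt_comp_of_isCompactOperator (g := g) (φ := fm 1) (j := down ιF 1)
    (hf.hasFDerivAt hU hx) (hιE.clm_comp (Df x))
    ((hf.1 1).1.continuousAt hxU) (eventually_of_mem hxU fun z hz => ((hf.1 1).2 z hz).symm)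
    (eventually_of_mem hyV fun z hz => hg.hasFDerivAt hV hz) fun k => ?_
  exact hg.continuousOn_apply.continuousAt
    (((isOpen_preimage_down hV 1).preimage continuous_fst).mem_nhds hy)

theorem IsSc1With.exists_tangent_comp (hιF : Function.Injective (ιF 0))
    (hf : IsSc1With ιE ιF U f fm Df) (hg : IsSc1With ιF ιG V g gm Dg) (hfV : MapsTo f U V)
    (m : ℕ) : ∃ Tm : E (m + 1) → E m → G m,
      ContinuousOn (fun p : E (m + 1) × E m => Tm p.1 p.2) {p | down ιE (m + 1) p.1 ∈ U} ∧
      ∀ (x : E (m + 1)) (h : E m), down ιE (m + 1) x ∈ U →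
        down ιG m (Tm x h) = (Dg (fm 1 (down1 ιE m x))).comp (Df (down1 ιE m x)) (down ιE m h) := by
  obtain ⟨Dfm, hDfm_cont, hDfm⟩ := hf.2.2 m
  obtain ⟨Dgm, hDgm_cont, hDgm⟩ := hg.2.2 m
  refine ⟨fun x h => Dgm (fm (m + 1) x) (Dfm x h), ?_, fun x h hx => ?_⟩
  · exact hDgm_cont.comp (((hf.1 (m + 1)).1.comp continuousOn_fst fun _ hp => hp).prodMk hDfm_cont)
      fun p hp => hf.1.down_mem hfV hp
  · rw [hDgm _ _ (hf.1.down_mem hfV hx), hDfm x h hx, hf.1.down1_apply hιF hx]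
    rfl

end

theorem stmt11_general (ιE : ∀ m, E (m + 1) →L[ℝ] E m) (ιF : ∀ m, F (m + 1) →L[ℝ] F m)
    (ιG : ∀ m, G (m + 1) →L[ℝ] G m)
    (hE : ScStructure ιE) (hF : ScStructure ιF)
    (U : Set (E 0)) (V : Set (F 0)) (hU : IsOpen U) (hV : IsOpen V)
    (f : E 0 → F 0) (g : F 0 → G 0)
    (fm : ∀ m, E m → F m) (gm : ∀ m, F m → G m)
    (Df : E 1 → (E 0 →L[ℝ] F 0)) (Dg : F 1 → (F 0 →L[ℝ] G 0))
    (hf : IsSc1With ιE ιF U f fm Df) (hg : IsSc1With ιF ιG V g gm Dg)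
    (hfV : Set.MapsTo f U V) :
    IsSc1With ιE ιG U (g ∘ f) (fun m => gm m ∘ fm m)
      (fun x : E 1 => (Dg (fm 1 x)).comp (Df x)) := by
  refine ⟨hg.1.comp hf.1 hfV, fun x hx ε hε => ?_, hf.exists_tangent_comp (hF.1 0) hg hfV⟩
  obtain ⟨δ, hδ, hest⟩ :=
    (hf.hasFDerivAt_comp hU hV (hE.2.1 0) hg hfV hx).exists_norm_sub_sub_le hε
  exact ⟨δ, hδ, fun h hh _ => hest h hh⟩

theorem stmt11 (ιE : ∀ m, E (m + 1) →L[ℝ] E m) (ιF : ∀ m, F (m + 1) →L[ℝ] F m)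
    (ιG : ∀ m, G (m + 1) →L[ℝ] G m)
    (hE : ScStructure ιE) (hF : ScStructure ιF) (hG : ScStructure ιG)
    (U : Set (E 0)) (V : Set (F 0)) (hU : IsOpen U) (hV : IsOpen V)
    (f : E 0 → F 0) (g : F 0 → G 0)
    (fm : ∀ m, E m → F m) (gm : ∀ m, F m → G m)
    (Df : E 1 → (E 0 →L[ℝ] F 0)) (Dg : F 1 → (F 0 →L[ℝ] G 0))
    (hf : IsSc1With ιE ιF U f fm Df) (hg : IsSc1With ιF ιG V g gm Dg)
    (hfV : Set.MapsTo f U V) :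
    IsSc1With ιE ιG U (g ∘ f) (fun m => gm m ∘ fm m)
      (fun x : E 1 => (Dg (fm 1 x)).comp (Df x)) :=
  stmt11_general ιE ιF ιG hE hF U V hU hV f g fm gm Df Dg hf hg hfV
end

section
/- Let Φ : U → U′ be a diffeomorphism between relatively open neighborhoods U, U′ of points (r,a) and (r′,a′) in partial quadrants [0,∞)ᵏ ⊕ Q and [0,∞)^{k'} ⊕ Q′ of Banach spaces, with Φ(r,a) = (r′,a′), such that the derivative DΦ(r,a) is a linear isomorphism. Then the number of vanishing coordinates of r ∈ [0,∞)ᵏ equals the number of vanishing coordinates of r′ ∈ [0,∞)^{k'}. (Finite-dimensional/Banach version of corner recognition: diffeomorphisms of quadrants preserve the degeneracy index.) -/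
/-!
The derivative `L` of `Φ` maps the positive tangent cone of the source quadrant at `(r, a)` into
that of the target quadrant at `(r', a')`, and `L⁻¹` maps it back, so `L` carries one cone onto the
other. At a point of a quadrant this cone is `{v | vᵢ ≥ 0 whenever rᵢ = 0}`, whose largest linear
subspace `{v | vᵢ = 0 whenever rᵢ = 0}` has codimension `#{i | rᵢ = 0}`. A linear isomorphism
matching the cones matches these subspaces, hence their codimensions.
-/

open Filter Set Topology

section PosTangentCone

variable {E F : Type*} [NormedAddCommGroup E] [NormedSpace ℝ E]
  [NormedAddCommGroup F] [NormedSpace ℝ F]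

theorem HasFDerivWithinAt.mapsTo_posTangentConeAt {f : E → F} {f' : E →L[ℝ] F} {s : Set E}
    {t : Set F} {x : E} (hf : HasFDerivWithinAt f f' s x) (hst : MapsTo f s t) :
    MapsTo f' (posTangentConeAt s x) (posTangentConeAt t (f x)) := by
  intro y hy
  obtain ⟨α, l, hl, c, d, hd₀, hds, hcd⟩ := exists_fun_of_mem_tangentConeAt hy
  refine mem_tangentConeAt_of_seq l c (fun n ↦ f (x + d n) - f x) ?_ ?_ ?_
  · rw [tendsto_sub_nhds_zero_iff]
    exact hf.continuousWithinAt.tendsto.comp <|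
      tendsto_nhdsWithin_iff.mpr ⟨by simpa using tendsto_const_nhds.add hd₀, hds⟩
  · filter_upwards [hds] with n hn using by simpa using hst hn
  · simpa only [NNReal.smul_def] using
      hf.lim (c := fun n ↦ (c n : ℝ)) hd₀ hds (by simpa only [NNReal.smul_def] using hcd)

theorem HasFDerivWithinAt.apply_mem_posTangentConeAt_iff {Φ : E → F} {Ψ : F → E} {s : Set E}
    {t : Set F} {x : E} {L : E ≃L[ℝ] F} (hΦ : HasFDerivWithinAt Φ (L : E →L[ℝ] F) s x)
    (hΨ : HasFDerivWithinAt Ψ (L.symm : F →L[ℝ] E) t (Φ x)) (hΦst : MapsTo Φ s t)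
    (hΨts : MapsTo Ψ t s) (hx : Ψ (Φ x) = x) (v : E) :
    L v ∈ posTangentConeAt t (Φ x) ↔ v ∈ posTangentConeAt s x := by
  refine ⟨fun hv ↦ ?_, fun hv ↦ hΦ.mapsTo_posTangentConeAt hΦst hv⟩
  simpa [hx] using hΨ.mapsTo_posTangentConeAt hΨts hv

end PosTangentCone

section Quadrant

variable {ι Q : Type*}

def cornerCone (r : ι → ℝ) : Set ((ι → ℝ) × Q) := {v | ∀ i, r i = 0 → 0 ≤ v.1 i}

theorem posTangentConeAt_quadrant [Fintype ι] [NormedAddCommGroup Q] [NormedSpace ℝ Q]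
    {O : Set ((ι → ℝ) × Q)} (hO : IsOpen O)
    {r : ι → ℝ} {a : Q} (hra : (r, a) ∈ O) (hr : ∀ i, 0 ≤ r i) :
    posTangentConeAt (O ∩ {p | ∀ i, 0 ≤ p.1 i}) (r, a) = cornerCone r := by
  ext v
  refine ⟨fun hv i hi ↦ ?_, fun hv ↦ ?_⟩
  · -- a vanishing coordinate is a linear functional attaining its minimum on the quadrant
    let φ : StrongDual ℝ ((ι → ℝ) × Q) :=
      (ContinuousLinearMap.proj i).comp (ContinuousLinearMap.fst ℝ (ι → ℝ) Q)
    have hmin : IsLocalMinOn φ (O ∩ {p | ∀ i, 0 ≤ p.1 i}) (r, a) :=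
      IsMinOn.localize fun p hp ↦ by simpa [φ, hi] using hp.2 i
    exact hmin.hasFDerivWithinAt_nonneg φ.hasFDerivWithinAt hv
  · refine mem_posTangentConeAt_of_frequently_mem (Eventually.frequently ?_)
    have hline : Continuous fun t : ℝ ↦ (r, a) + t • v := by fun_prop
    have hO : ∀ᶠ t : ℝ in 𝓝[>] 0, (r, a) + t • v ∈ O :=
      nhdsWithin_le_nhds <| hline.tendsto' 0 _ (by simp) |>.eventually (hO.mem_nhds hra)
    have hquad : ∀ᶠ t : ℝ in 𝓝[>] 0, ∀ i, 0 ≤ r i + t * v.1 i := by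
      refine eventually_all.2 fun i ↦ ?_
      rcases (hr i).eq_or_lt with hi | hi
      · filter_upwards [self_mem_nhdsWithin] with t ht
        rw [← hi, zero_add]
        exact mul_nonneg (le_of_lt ht) (hv i hi.symm)
      · have hcont : Continuous fun t : ℝ ↦ r i + t * v.1 i := by fun_prop
        exact nhdsWithin_le_nhds <| (hcont.tendsto' 0 _ (by simp)).eventually
          (eventually_ge_nhds hi)
    filter_upwards [hO, hquad] with t htO ht using ⟨htO, ht⟩

variable [AddCommGroup Q] [Module ℝ Q]

variable (Q) in
def zeroCoordProj (r : ι → ℝ) : (ι → ℝ) × Q →ₗ[ℝ] ({i | r i = 0} → ℝ) :=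
  LinearMap.funLeft ℝ ℝ Subtype.val ∘ₗ LinearMap.fst ℝ (ι → ℝ) Q

theorem zeroCoordProj_surjective (r : ι → ℝ) : Function.Surjective (zeroCoordProj Q r) :=
  (LinearMap.funLeft_surjective_of_injective ℝ ℝ _ Subtype.val_injective).comp
    Prod.fst_surjective

theorem mem_ker_zeroCoordProj_iff {r : ι → ℝ} {v : (ι → ℝ) × Q} :
    v ∈ LinearMap.ker (zeroCoordProj Q r) ↔ v ∈ cornerCone r ∧ -v ∈ cornerCone r := by
  simp only [LinearMap.mem_ker, zeroCoordProj, cornerCone, funext_iff, LinearMap.coe_comp,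
    Function.comp_apply, LinearMap.funLeft_apply, LinearMap.fst_apply, Pi.zero_apply,
    Subtype.forall, mem_ofPred_eq, Prod.fst_neg, Pi.neg_apply, neg_nonneg, ← forall_and]
  exact forall₂_congr fun i _ ↦ le_antisymm_iff.trans and_comm

end Quadrant

theorem LinearMap.finrank_eq_of_map_ker_eq {R M N V W : Type*} [Ring R] [AddCommGroup M]
    [AddCommGroup N] [AddCommGroup V] [AddCommGroup W] [Module R M] [Module R N] [Module R V]
    [Module R W] {f : M →ₗ[R] V} {g : N →ₗ[R] W} (hf : Function.Surjective f)
    (hg : Function.Surjective g) (e : M ≃ₗ[R] N) (he : (ker f).map (e : M →ₗ[R] N) = ker g) :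
    Module.finrank R V = Module.finrank R W :=
  ((f.quotKerEquivOfSurjective hf).symm.trans
    ((Submodule.Quotient.equiv _ _ e he).trans (g.quotKerEquivOfSurjective hg))).finrank_eq

theorem ncard_zeros_eq_of_apply_mem_cornerCone_iff {ι ι' Q Q' : Type*} [Finite ι] [Finite ι']
    [AddCommGroup Q] [Module ℝ Q] [AddCommGroup Q'] [Module ℝ Q'] {r : ι → ℝ} {r' : ι' → ℝ}
    (L : ((ι → ℝ) × Q) ≃ₗ[ℝ] ((ι' → ℝ) × Q'))
    (hL : ∀ v, L v ∈ cornerCone r' ↔ v ∈ cornerCone r) :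
    {i | r i = 0}.ncard = {j | r' j = 0}.ncard := by
  have hker : (LinearMap.ker (zeroCoordProj Q r)).map (L : _ →ₗ[ℝ] _) =
      LinearMap.ker (zeroCoordProj Q' r') := by
    ext w
    rw [Submodule.mem_map_equiv, mem_ker_zeroCoordProj_iff, mem_ker_zeroCoordProj_iff, ← hL,
      ← hL, map_neg, LinearEquiv.apply_symm_apply]
  have := Fintype.ofFinite ι
  have := Fintype.ofFinite ι'
  have hrank := LinearMap.finrank_eq_of_map_ker_eq (zeroCoordProj_surjective r)
    (zeroCoordProj_surjective r') L hker
  simpa only [Module.finrank_fintype_fun_eq_card, ← Nat.card_eq_fintype_card,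
    Nat.card_coe_set_eq] using hrank

theorem stmt16_general {Q Q' : Type*} [NormedAddCommGroup Q] [NormedSpace ℝ Q]
    [NormedAddCommGroup Q'] [NormedSpace ℝ Q'] {k k' : ℕ}
    (U : Set ((Fin k → ℝ) × Q)) (U' : Set ((Fin k' → ℝ) × Q'))
    (hU : ∃ O, IsOpen O ∧ U = O ∩ {p : (Fin k → ℝ) × Q | ∀ i, 0 ≤ p.1 i})
    (hU' : ∃ O', IsOpen O' ∧ U' = O' ∩ {p : (Fin k' → ℝ) × Q' | ∀ j, 0 ≤ p.1 j})
    (Φ : (Fin k → ℝ) × Q → (Fin k' → ℝ) × Q')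
    (Ψ : (Fin k' → ℝ) × Q' → (Fin k → ℝ) × Q)
    (hΦU : Set.MapsTo Φ U U') (hΨU' : Set.MapsTo Ψ U' U)
    (hinv₁ : ∀ p ∈ U, Ψ (Φ p) = p)
    (r : Fin k → ℝ) (a : Q) (r' : Fin k' → ℝ) (a' : Q')
    (hra : (r, a) ∈ U) (hΦra : Φ (r, a) = (r', a'))
    (L : ((Fin k → ℝ) × Q) ≃L[ℝ] ((Fin k' → ℝ) × Q'))
    (hDΦ : HasFDerivWithinAt Φ (L : ((Fin k → ℝ) × Q) →L[ℝ] ((Fin k' → ℝ) × Q')) U (r, a))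
    (hDΨ : HasFDerivWithinAt Ψ
      (L.symm : ((Fin k' → ℝ) × Q') →L[ℝ] ((Fin k → ℝ) × Q)) U' (r', a')) :
    {i : Fin k | r i = 0}.ncard = {j : Fin k' | r' j = 0}.ncard := by
  obtain ⟨O, hO, rfl⟩ := hU
  obtain ⟨O', hO', rfl⟩ := hU'
  have hra' : (r', a') ∈ O' ∩ {p | ∀ j, 0 ≤ p.1 j} := hΦra ▸ hΦU hra
  rw [← hΦra] at hDΨ
  have hcone := hDΦ.apply_mem_posTangentConeAt_iff hDΨ hΦU hΨU' (hinv₁ _ hra)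
  rw [hΦra, posTangentConeAt_quadrant hO' hra'.1 hra'.2,
    posTangentConeAt_quadrant hO hra.1 hra.2] at hcone
  exact ncard_zeros_eq_of_apply_mem_cornerCone_iff L.toLinearEquiv hcone

theorem stmt16 {Q Q' : Type*} [NormedAddCommGroup Q] [NormedSpace ℝ Q]
    [NormedAddCommGroup Q'] [NormedSpace ℝ Q'] {k k' : ℕ}
    (U : Set ((Fin k → ℝ) × Q)) (U' : Set ((Fin k' → ℝ) × Q'))
    (hU : ∃ O, IsOpen O ∧ U = O ∩ {p : (Fin k → ℝ) × Q | ∀ i, 0 ≤ p.1 i})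
    (hU' : ∃ O', IsOpen O' ∧ U' = O' ∩ {p : (Fin k' → ℝ) × Q' | ∀ j, 0 ≤ p.1 j})
    (Φ : (Fin k → ℝ) × Q → (Fin k' → ℝ) × Q')
    (Ψ : (Fin k' → ℝ) × Q' → (Fin k → ℝ) × Q)
    (hΦU : Set.MapsTo Φ U U') (hΨU' : Set.MapsTo Ψ U' U)
    (hΦcont : ContinuousOn Φ U) (hΨcont : ContinuousOn Ψ U')
    (hinv₁ : ∀ p ∈ U, Ψ (Φ p) = p) (hinv₂ : ∀ p ∈ U', Φ (Ψ p) = p)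
    (r : Fin k → ℝ) (a : Q) (r' : Fin k' → ℝ) (a' : Q')
    (hra : (r, a) ∈ U) (hΦra : Φ (r, a) = (r', a'))
    (L : ((Fin k → ℝ) × Q) ≃L[ℝ] ((Fin k' → ℝ) × Q'))
    (hDΦ : HasFDerivWithinAt Φ (L : ((Fin k → ℝ) × Q) →L[ℝ] ((Fin k' → ℝ) × Q')) U (r, a))
    (hDΨ : HasFDerivWithinAt Ψ
      (L.symm : ((Fin k' → ℝ) × Q') →L[ℝ] ((Fin k → ℝ) × Q)) U' (r', a')) :
    {i : Fin k | r i = 0}.ncard = {j : Fin k' | r' j = 0}.ncard :=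
  stmt16_general U U' hU hU' Φ Ψ hΦU hΨU' hinv₁ r a r' a' hra hΦra L hDΦ hDΨ
end
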